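/- arXiv:2205.00744 — 9 statements merged into one kernel-verified Lean document; each statement's English description precedes it below -/
import Mathlib

section
/- For all integers c ≥ 1 and l ≥ 1: cnt₁₂(c,l) = cnt_JL(c,l). That is, the statespace of the witnesses of Calude et al. improved by restricting each odd colour to at most one occurrence and disallowing colours above the highest even colour has exactly the same size as the statespace of the concise progress measures of Jurdziński and Lasic. -/
/-- The number of Jurdziński–Lasic concise progress measures (excluding the winning state),
for `c` even priorities and total length bound `l`. -/
def cntJL : ℕ → ℕ → ℕ
  | _, 0 => 1
  | c, 1 => 2 * c + 1
  | 0, _ + 2 => 1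
  | 1, l + 2 => 2 ^ (l + 3) - 1
  | c + 2, l + 2 => cntJL (c + 1) (l + 2) + 2 * cntJL (c + 2) (l + 1)
termination_by c l => (l, c)

/-- The size of the statespace of the witnesses of Calude et al. improved by
restricting each odd colour to at most one occurrence and disallowing colours above
the highest even colour, for `c` even priorities and length `l ≥ 1`. -/
def cnt12 : ℕ → ℕ → ℕ
  | _, 0 => 0
  | c, 1 => 2 * c + 1
  | c, l + 2 => 1 + 2 * ∑ i ∈ Finset.Icc 1 c, cnt12 i (l + 1)
termination_by _ l => l

lemma cnt12_one : ∀ l, cnt12 1 (l + 1) = 2 ^ (l + 2) - 1 := by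
  intro l
  induction l with
  | zero => simp [cnt12]
  | succ l ih =>
    rw [show l + 1 + 1 = l + 2 from rfl, cnt12]
    simp only [Finset.Icc_self, Finset.sum_singleton]
    have h1 : 1 ≤ 2 ^ (l + 2) := Nat.one_le_two_pow
    have h2 : 2 ^ (l + 1 + 2) = 2 * 2 ^ (l + 2) := by ring
    omega

lemma cnt12_step (c l : ℕ) :
    cnt12 (c + 2) (l + 2) = cnt12 (c + 1) (l + 2) + 2 * cnt12 (c + 2) (l + 1) := by
  rw [cnt12, cnt12]
  rw [show c + 2 = (c + 1) + 1 from rfl,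
    Finset.sum_Icc_succ_top (by omega : 1 ≤ c + 1 + 1)]
  ring

lemma main_aux : ∀ l c, 1 ≤ c → cnt12 c (l + 1) = cntJL c (l + 1) := by
  intro l
  induction l with
  | zero => intro c hc; rw [cnt12, cntJL]
  | succ l ih =>
    intro c hc
    obtain ⟨c', rfl⟩ : ∃ c', c = c' + 1 := ⟨c - 1, by omega⟩
    induction c' with
    | zero => rw [cnt12_one, cntJL]
    | succ c' ihc =>
      rw [show c' + 1 + 1 = c' + 2 from rfl, show l + 1 + 1 = l + 2 from rfl,
        cnt12_step, cntJL, ihc (by omega), ih (c' + 2) (by omega)]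

theorem cnt12_eq_cntJL (c l : ℕ) (hc : 1 ≤ c) (hl : 1 ≤ l) :
    cnt12 c l = cntJL c l := by
  obtain ⟨l', rfl⟩ : ∃ l', l = l' + 1 := ⟨l - 1, by omega⟩
  exact main_aux l' c hc
end

section
/- For all integers c ≥ 1 and l ≥ 0: cnt_JL(c,l) = 1 + Σ_{i=1}^{l} Σ_{j=1}^{min(i,c)} 2^i · C(c,j) · C(i−1, j−1), where C(n,k) denotes the binomial coefficient (and the outer sum is empty for l = 0). -/
lemma sum_Icc_one_eq_range (n : ℕ) (f : ℕ → ℕ) :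
    ∑ i ∈ Finset.Icc 1 n, f i = ∑ j ∈ Finset.range n, f (1 + j) := by
  rw [← Finset.Ico_add_one_right_eq_Icc, Finset.sum_Ico_eq_sum_range]
  simp

lemma geom_aux (n : ℕ) : 1 + ∑ j ∈ Finset.range n, 2 ^ (j + 1) = 2 ^ (n + 1) - 1 := by
  induction n with
  | zero => simp
  | succ n ih =>
    rw [Finset.sum_range_succ]
    have h1 : (1:ℕ) ≤ 2 ^ (n + 1) := Nat.one_le_two_pow
    have h2 : (2:ℕ) ^ (n + 2) = 2 * 2 ^ (n + 1) := by ring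
    omega

lemma sumid (c l : ℕ) :
    ∑ j ∈ Finset.range (l + 2), 2 ^ (j + 1) * (c + j + 2).choose (j + 1)
      = 2 + ∑ j ∈ Finset.range (l + 2), 2 ^ (j + 1) * (c + j + 1).choose (j + 1)
        + 2 * ∑ j ∈ Finset.range (l + 1), 2 ^ (j + 1) * (c + j + 2).choose (j + 1) := by
  have hsplit : ∑ j ∈ Finset.range (l + 2), 2 ^ (j + 1) * (c + j + 2).choose (j + 1)
      = ∑ j ∈ Finset.range (l + 2),
          (2 ^ (j + 1) * (c + j + 1).choose j + 2 ^ (j + 1) * (c + j + 1).choose (j + 1)) := by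
    refine Finset.sum_congr rfl fun j _ => ?_
    have : (c + j + 2).choose (j + 1) = (c + j + 1).choose j + (c + j + 1).choose (j + 1) :=
      Nat.choose_succ_succ' (c + j + 1) j
    rw [this, Nat.mul_add]
  rw [hsplit, Finset.sum_add_distrib]
  have hfirst : ∑ j ∈ Finset.range (l + 2), 2 ^ (j + 1) * (c + j + 1).choose j
      = 2 + 2 * ∑ j ∈ Finset.range (l + 1), 2 ^ (j + 1) * (c + j + 2).choose (j + 1) := by
    rw [Finset.sum_range_succ' (fun j => 2 ^ (j + 1) * (c + j + 1).choose j) (l + 1)]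
    rw [Finset.mul_sum]
    have : ∀ j, 2 ^ (j + 1 + 1) * (c + (j + 1) + 1).choose (j + 1)
        = 2 * (2 ^ (j + 1) * (c + j + 2).choose (j + 1)) := by
      intro j; ring_nf
    simp only [this]
    simp [Nat.add_comm]
  rw [hfirst]
  ring

theorem key : ∀ c l : ℕ, cntJL (c + 1) l
    = 1 + ∑ j ∈ Finset.range l, 2 ^ (j + 1) * (c + j + 1).choose (j + 1)
  | c, 0 => by simp [cntJL]
  | c, 1 => by
    simp [cntJL, Finset.sum_range_one]
    omega
  | 0, l + 2 => by
    have h : ∀ j : ℕ, 2 ^ (j + 1) * (0 + j + 1).choose (j + 1) = 2 ^ (j + 1) := by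
      intro j; simp
    show cntJL 1 (l + 2) = _
    simp only [h]
    rw [show cntJL 1 (l + 2) = 2 ^ (l + 3) - 1 from by rw [cntJL]]
    rw [geom_aux]
  | c + 1, l + 2 => by
    have h1 := key c (l + 2)
    have h2 := key (c + 1) (l + 1)
    show cntJL (c + 2) (l + 2) = _
    rw [show cntJL (c + 2) (l + 2) = cntJL (c + 1) (l + 2) + 2 * cntJL (c + 2) (l + 1) from by
      rw [cntJL]]
    rw [h1, h2]
    have := sumid c l
    have hc : ∀ j, c + 1 + j + 1 = c + j + 2 := by intro j; ring
    simp only [hc]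
    omega
termination_by c l => (l, c)

lemma vander (c k : ℕ) :
    ∑ j ∈ Finset.Icc 1 (min (k + 1) (c + 1)), (c + 1).choose j * k.choose (j - 1)
      = (c + k + 1).choose (k + 1) := by
  have h1 : ∑ j ∈ Finset.Icc 1 (min (k + 1) (c + 1)), (c + 1).choose j * k.choose (j - 1)
      = ∑ j ∈ Finset.Icc 1 (k + 1), (c + 1).choose j * k.choose (j - 1) := by
    apply Finset.sum_subset
    · exact Finset.Icc_subset_Icc_right (min_le_left _ _)
    · intro j hj hnj
      simp only [Finset.mem_Icc] at hj hnj
      have : c + 1 < j := by omega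
      simp [Nat.choose_eq_zero_of_lt this]
  rw [h1, sum_Icc_one_eq_range]
  have h2 : (c + k + 1).choose (k + 1)
      = ∑ a ∈ Finset.range (k + 2), (c + 1).choose a * k.choose (k + 1 - a) := by
    rw [show c + k + 1 = (c + 1) + k from by ring, Nat.add_choose_eq,
      Finset.Nat.sum_antidiagonal_eq_sum_range_succ (fun a b => (c + 1).choose a * k.choose b)]
  rw [h2, Finset.sum_range_succ' (fun a => (c + 1).choose a * k.choose (k + 1 - a)) (k + 1)]
  have hz : (c + 1).choose 0 * k.choose (k + 1 - 0) = 0 := by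
    simp [Nat.choose_eq_zero_of_lt (Nat.lt_succ_self k)]
  rw [hz, add_zero]
  refine Finset.sum_congr rfl fun a ha => ?_
  simp only [Finset.mem_range] at ha
  have hle : a ≤ k := by omega
  have hk : k + 1 - (a + 1) = k - a := by omega
  rw [hk, Nat.choose_symm hle, show 1 + a = a + 1 from Nat.add_comm 1 a, Nat.add_sub_cancel]

theorem cntJL_closed_form (c : ℕ) (hc : 1 ≤ c) (l : ℕ) :
    cntJL c l =
      1 + ∑ i ∈ Finset.Icc 1 l, ∑ j ∈ Finset.Icc 1 (min i c),
        2 ^ i * Nat.choose c j * Nat.choose (i - 1) (j - 1) := by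
  obtain ⟨c', rfl⟩ : ∃ c', c = c' + 1 := ⟨c - 1, by omega⟩
  rw [key c' l, sum_Icc_one_eq_range]
  congr 1
  refine Finset.sum_congr rfl fun k _ => ?_
  have hinner : ∑ j ∈ Finset.Icc 1 (min (1 + k) (c' + 1)),
      2 ^ (1 + k) * (c' + 1).choose j * (1 + k - 1).choose (j - 1)
      = 2 ^ (1 + k) * ∑ j ∈ Finset.Icc 1 (min (k + 1) (c' + 1)),
          (c' + 1).choose j * k.choose (j - 1) := by
    rw [Finset.mul_sum]
    rw [show 1 + k = k + 1 from by ring]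
    refine Finset.sum_congr rfl fun j _ => ?_
    rw [Nat.add_sub_cancel, mul_assoc]
  rw [hinner, vander]
  rw [show 1 + k = k + 1 from by ring]
end

section
/- For all integers c ≥ 1 and l ≥ 0: cnt_JL(c, l+1) = 1 + 2·Σ_{i=1}^{c} cnt_JL(i, l). -/
lemma cntJL_one : ∀ n, cntJL 1 n = 2 ^ (n + 1) - 1
  | 0 => by simp [cntJL]
  | 1 => by simp [cntJL]
  | _ + 2 => by simp [cntJL]

lemma cntJL_len_one (c : ℕ) : cntJL c 1 = 2 * c + 1 := by
  cases c with
  | zero => simp [cntJL]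
  | succ k => cases k <;> simp [cntJL]

theorem cntJL_succ (c : ℕ) (hc : 1 ≤ c) (l : ℕ) :
    cntJL c (l + 1) = 1 + 2 * ∑ i ∈ Finset.Icc 1 c, cntJL i l := by
  cases l with
  | zero =>
    show cntJL c 1 = 1 + 2 * ∑ i ∈ Finset.Icc 1 c, cntJL i 0
    rw [cntJL_len_one]
    have : ∑ i ∈ Finset.Icc 1 c, cntJL i 0 = c := by
      have : ∀ i ∈ Finset.Icc 1 c, cntJL i 0 = 1 := fun i _ => by simp [cntJL]
      rw [Finset.sum_congr rfl this, Finset.sum_const, Nat.card_Icc]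
      simp
    rw [this]; ring
  | succ m =>
    induction c, hc using Nat.le_induction with
    | base =>
      rw [Finset.Icc_self, Finset.sum_singleton, cntJL_one, cntJL_one]
      have h1 : 1 ≤ 2 ^ (m + 1 + 1) := Nat.one_le_two_pow
      have h2 : (2 : ℕ) ^ (m + 1 + 1 + 1) = 2 * 2 ^ (m + 1 + 1) := by ring
      omega
    | succ c hc ih =>
      obtain ⟨k, rfl⟩ : ∃ k, c = k + 1 := ⟨c - 1, by omega⟩
      rw [Finset.sum_Icc_succ_top (by omega)]
      show cntJL (k + 2) (m + 2) = _
      rw [cntJL, ih]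
      ring
end

section
/- If b = b_k,…,b_0 is a witness for a play prefix ρ = v_1,…,v_m, then ρ contains an even chain of length val(b). -/
open scoped Classical

/-- Membership in `C⁻`, where `C = {lo,…,hi}`: everything of `C` except `hi` when `hi` is odd. -/
def CminusMem (lo hi c : ℕ) : Prop := lo ≤ c ∧ c ≤ hi ∧ (Even hi ∨ c ≠ hi)

/-- The index of the first position of an `i`-witness ending in colour `c`:
`1` for even witnesses and `0` for odd witnesses. -/
def startIdx (c : ℕ) : ℕ := if Even c then 1 else 0

variable {V : Type*}

/-- `p`, on indices `lo', lo'+1, …, len`, is a sequence of positions of the play prefix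
`v_1, …, v_m` that is strictly increasing, whose positions before the final one carry even
colours, and that satisfies inner and (strict) outer domination. -/
def IsIWitAux (φ : V → ℕ) (v : ℕ → V) (m lo' len : ℕ) (p : ℕ → ℕ) : Prop :=
  (∀ j, lo' ≤ j → j ≤ len → 1 ≤ p j ∧ p j ≤ m) ∧
  (∀ j, lo' ≤ j → j < len → p j < p (j + 1)) ∧
  (∀ j, lo' ≤ j → j < len → Even (φ (v (p j)))) ∧
  (∀ j, lo' ≤ j → j < len → ∀ t, p j ≤ t → t ≤ p (j + 1) →
      φ (v t) ≤ max (φ (v (p j))) (φ (v (p (j + 1))))) ∧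
  (∀ t, p len < t → t ≤ m → φ (v t) ≤ φ (v (p len)))

/-- `b = b_k,…,b_0` (with `b i` the entry of index `i`) is a witness for the play prefix
`v_1,…,v_m`, for the colouring `φ` into `C = {lo,…,hi}`. -/
def IsWitness (lo hi : ℕ) (φ : V → ℕ) (v : ℕ → V) (m k : ℕ) (b : ℕ → Option ℕ) : Prop :=
  (∀ i ≤ k, ∀ c, b i = some c → CminusMem lo hi c) ∧
  (∀ c, b 0 = some c → Even c) ∧
  ∃ p : ℕ → ℕ → ℕ,
    (∀ i ≤ k, ∀ c, b i = some c →
        IsIWitAux φ v m (startIdx c) (2 ^ i) (p i) ∧ φ (v (p i (2 ^ i))) = c) ∧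
    (∀ i j, i < j → j ≤ k → ∀ ci cj, b i = some ci → b j = some cj →
        p j (2 ^ j) < p i (startIdx ci))

/-- `q`, on indices `1,…,ℓ`, is an even chain of length `ℓ` in the play prefix `v_1,…,v_m`. -/
def IsEvenChain (φ : V → ℕ) (v : ℕ → V) (m ℓ : ℕ) (q : ℕ → ℕ) : Prop :=
  (∀ j, 1 ≤ j → j ≤ ℓ → 1 ≤ q j ∧ q j ≤ m) ∧
  (∀ j, 1 ≤ j → j < ℓ → q j < q (j + 1)) ∧
  (∀ j, 1 ≤ j → j ≤ ℓ → Even (φ (v (q j)))) ∧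
  (∀ j, 1 ≤ j → j < ℓ → ∀ t, q j ≤ t → t ≤ q (j + 1) →
      φ (v t) ≤ max (φ (v (q j))) (φ (v (q (j + 1)))))

/-- Indices of entries of the witness carrying an even colour. -/
noncomputable def evenIdx (k : ℕ) (b : ℕ → Option ℕ) : Finset ℕ :=
  (Finset.range (k + 1)).filter fun i => ∃ c, b i = some c ∧ Even c

/-- Indices of entries of the witness carrying an odd colour. -/
noncomputable def oddIdx (k : ℕ) (b : ℕ → Option ℕ) : Finset ℕ :=
  (Finset.range (k + 1)).filter fun i => ∃ c, b i = some c ∧ Odd c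

/-- `evenodd(b)`: the even indices if no entry is odd; otherwise the even indices above the
largest odd index `o`, together with `o`. -/
noncomputable def evenodd (k : ℕ) (b : ℕ → Option ℕ) : Finset ℕ :=
  if h : (oddIdx k b).Nonempty then
    ((evenIdx k b).filter fun i => (oddIdx k b).max' h < i) ∪ {(oddIdx k b).max' h}
  else evenIdx k b

/-- The value of a witness: `val(b) = Σ_{i ∈ evenodd(b)} 2^i`. -/
noncomputable def valw (k : ℕ) (b : ℕ → Option ℕ) : ℕ := ∑ i ∈ evenodd k b, 2 ^ i

/-!
An even `i`-witness is already an even chain of length `2^i`, and an odd one becomes one once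
its odd last position is dropped. The witnesses of the indices in `evenodd(b)` appear in the
play in order of decreasing index, and all of them except possibly the last (the largest odd
index) are even; the outer domination of an even witness is exactly what allows the chain of
the later witnesses to be appended to it. Concatenating yields a chain of length
`Σ_{i ∈ evenodd(b)} 2^i = val(b)`.
-/

open Finset

namespace IsEvenChain

variable {φ : V → ℕ} {v : ℕ → V} {m : ℕ}

theorem append {a ℓ : ℕ} {r q : ℕ → ℕ} (hr : IsEvenChain φ v m a r) (hq : IsEvenChain φ v m ℓ q)
    (hlt : 1 ≤ ℓ → r a < q 1)
    (hdom : ∀ t, r a < t → t ≤ m → φ (v t) ≤ φ (v (r a))) :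
    IsEvenChain φ v m (a + ℓ) (fun n => if n ≤ a then r n else q (n - a)) := by
  obtain ⟨hr_pos, hr_mono, hr_even, hr_dom⟩ := hr
  obtain ⟨hq_pos, hq_mono, hq_even, hq_dom⟩ := hq
  refine ⟨fun j hj hjℓ => ?_, fun j hj hjℓ => ?_, fun j hj hjℓ => ?_, fun j hj hjℓ t ht ht' => ?_⟩
  · dsimp only
    split_ifs with h
    · exact hr_pos j hj h
    · exact hq_pos (j - a) (by omega) (by omega)
  · rcases lt_trichotomy j a with h | rfl | h
    · simp only [if_pos h.le, if_pos (show j + 1 ≤ a by omega)]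
      exact hr_mono j hj h
    · simpa using hlt (by omega)
    · simp only [if_neg h.not_ge, if_neg (show ¬j + 1 ≤ a by omega),
        show j + 1 - a = j - a + 1 by omega]
      exact hq_mono (j - a) (by omega) (by omega)
  · dsimp only
    split_ifs with h
    · exact hr_even j hj h
    · exact hq_even (j - a) (by omega) (by omega)
  · rcases lt_trichotomy j a with h | rfl | h
    · simp only [if_pos h.le, if_pos (show j + 1 ≤ a by omega)] at ht ht' ⊢
      exact hr_dom j hj h t ht ht'
    · simp only [le_refl, if_true, if_neg (show ¬j + 1 ≤ j by omega),
        show j + 1 - j = 1 by omega] at ht ht' ⊢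
      rcases ht.eq_or_lt with rfl | ht
      · exact le_max_left _ _
      · exact (hdom t ht (ht'.trans (hq_pos 1 le_rfl (by omega)).2)).trans (le_max_left _ _)
    · simp only [if_neg h.not_ge, if_neg (show ¬j + 1 ≤ a by omega),
        show j + 1 - a = j - a + 1 by omega] at ht ht' ⊢
      exact hq_dom (j - a) (by omega) (by omega) t ht ht'

end IsEvenChain

namespace IsIWitAux

variable {φ : V → ℕ} {v : ℕ → V} {m len : ℕ} {p : ℕ → ℕ}

theorem isEvenChain (hp : IsIWitAux φ v m 1 len p) (hlast : Even (φ (v (p len)))) :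
    IsEvenChain φ v m len p := by
  obtain ⟨h_pos, h_mono, h_even, h_dom, -⟩ := hp
  refine ⟨h_pos, h_mono, fun j hj hjlen => ?_, h_dom⟩
  rcases hjlen.lt_or_eq with h | rfl
  · exact h_even j hj h
  · exact hlast

/-- The chain `p 0, …, p (len - 1)`: an odd witness without its odd last position. -/
theorem isEvenChain_pred (hp : IsIWitAux φ v m 0 len p) :
    IsEvenChain φ v m len (fun n => p (n - 1)) := by
  obtain ⟨h_pos, h_mono, h_even, h_dom, -⟩ := hp
  refine ⟨fun j _ hj => h_pos (j - 1) (by omega) (by omega), fun j hj hjlen => ?_,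
    fun j _ hj => h_even (j - 1) (by omega) (by omega), fun j hj hjlen t ht ht' => ?_⟩
  · simpa only [show j + 1 - 1 = j - 1 + 1 by omega] using h_mono (j - 1) (by omega) (by omega)
  · simp only [show j + 1 - 1 = j - 1 + 1 by omega] at ht' ⊢
    exact h_dom (j - 1) (by omega) (by omega) t ht ht'

theorem exists_isEvenChain (hp : IsIWitAux φ v m (startIdx (φ (v (p len)))) len p) :
    ∃ q, IsEvenChain φ v m len q ∧ q 1 = p (startIdx (φ (v (p len)))) := by
  by_cases h : Even (φ (v (p len)))
  · rw [startIdx, if_pos h] at hp ⊢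
    exact ⟨p, hp.isEvenChain h, rfl⟩
  · rw [startIdx, if_neg h] at hp ⊢
    exact ⟨_, hp.isEvenChain_pred, rfl⟩

end IsIWitAux

theorem exists_some_of_mem_evenodd {k i : ℕ} {b : ℕ → Option ℕ} (hi : i ∈ evenodd k b) :
    i ≤ k ∧ ∃ c, b i = some c := by
  have hsub : evenodd k b ⊆ evenIdx k b ∪ oddIdx k b := by
    unfold evenodd
    split_ifs with h
    · exact union_subset_union (filter_subset _ _) (singleton_subset_iff.2 (max'_mem _ h))
    · exact subset_union_left
  rcases mem_union.1 (hsub hi) with hi' | hi' <;>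
  · obtain ⟨hik, c, hc, -⟩ := mem_filter.1 hi'
    exact ⟨Nat.lt_succ_iff.1 (mem_range.1 hik), c, hc⟩

/-- When `b` has an odd entry, the largest odd index is the least element of `evenodd`. -/
theorem even_of_mem_evenodd_of_lt {k i j c : ℕ} {b : ℕ → Option ℕ} (hi : i ∈ evenodd k b)
    (hj : j ∈ evenodd k b) (hji : j < i) (hc : b i = some c) : Even c := by
  suffices hi' : i ∈ evenIdx k b by
    obtain ⟨c', hc', hev⟩ := (mem_filter.1 hi').2
    rw [hc, Option.some_inj] at hc'
    exact hc' ▸ hev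
  unfold evenodd at hi hj
  split_ifs at hi hj with h
  · rcases mem_union.1 hi with hi | hi
    · exact (mem_filter.1 hi).1
    · rw [mem_singleton.1 hi] at hji
      rcases mem_union.1 hj with hj | hj
      · exact absurd (mem_filter.1 hj).2 hji.not_gt
      · exact absurd (mem_singleton.1 hj) hji.ne
  · exact hi

theorem exists_isEvenChain_sum_two_pow {φ : V → ℕ} {v : ℕ → V} {m : ℕ} (p : ℕ → ℕ → ℕ)
    (S : Finset ℕ)
    (hwit : ∀ i ∈ S, IsIWitAux φ v m (startIdx (φ (v (p i (2 ^ i))))) (2 ^ i) (p i))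
    (hord : ∀ i ∈ S, ∀ j ∈ S, i < j → p j (2 ^ j) < p i (startIdx (φ (v (p i (2 ^ i))))))
    (heven : ∀ i ∈ S, ∀ j ∈ S, j < i → Even (φ (v (p i (2 ^ i))))) :
    ∃ q, IsEvenChain φ v m (∑ i ∈ S, 2 ^ i) q ∧
      (S.Nonempty → ∃ i ∈ S, q 1 = p i (startIdx (φ (v (p i (2 ^ i)))))) := by
  induction S using Finset.induction_on_max with
  | empty =>
    rw [sum_empty]
    exact ⟨id, ⟨fun _ _ _ => by omega, fun _ _ _ => by omega, fun _ _ _ => by omega,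
      fun _ _ _ => by omega⟩, by simp⟩
  | insert a s hlt ih =>
    have ha : a ∉ s := fun h => (hlt a h).false
    obtain ⟨q, hq, hq1⟩ := ih (fun i hi => hwit i (mem_insert_of_mem hi))
      (fun i hi j hj => hord i (mem_insert_of_mem hi) j (mem_insert_of_mem hj))
      (fun i hi j hj => heven i (mem_insert_of_mem hi) j (mem_insert_of_mem hj))
    have hwa := hwit a (mem_insert_self a s)
    rw [sum_insert ha]
    rcases s.eq_empty_or_nonempty with rfl | hs
    · obtain ⟨r, hr, hr1⟩ := hwa.exists_isEvenChain
      exact ⟨r, by simpa using hr, fun _ => ⟨a, mem_insert_self a ∅, hr1⟩⟩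
    obtain ⟨i, hi, hqi⟩ := hq1 hs
    have ha_even := heven a (mem_insert_self a s) i (mem_insert_of_mem hi) (hlt i hi)
    rw [startIdx, if_pos ha_even] at hwa
    refine ⟨_, (hwa.isEvenChain ha_even).append hq (fun _ => ?_) hwa.2.2.2.2,
      fun _ => ⟨a, mem_insert_self a s, by simp [startIdx, ha_even]⟩⟩
    rw [hqi]
    exact hord i (mem_insert_of_mem hi) a (mem_insert_self a s) (hlt i hi)

theorem witness_even_chain_general (lo hi : ℕ) (φ : V → ℕ) (v : ℕ → V) (m : ℕ)
    (k : ℕ) (b : ℕ → Option ℕ) (hb : IsWitness lo hi φ v m k b) :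
    ∃ q : ℕ → ℕ, IsEvenChain φ v m (valw k b) q := by
  obtain ⟨-, -, p, hwit, hord⟩ := hb
  have hcol : ∀ i ∈ evenodd k b, ∃ c, b i = some c ∧ i ≤ k ∧ φ (v (p i (2 ^ i))) = c := by
    intro i hi
    obtain ⟨hik, c, hc⟩ := exists_some_of_mem_evenodd hi
    exact ⟨c, hc, hik, (hwit i hik c hc).2⟩
  choose! c hc hik hφc using hcol
  obtain ⟨q, hq, -⟩ := exists_isEvenChain_sum_two_pow p (evenodd k b)
    (fun i hi => hφc i hi ▸ (hwit i (hik i hi) _ (hc i hi)).1)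
    (fun i hi j hj hij => hφc i hi ▸ hord i j hij (hik j hj) _ _ (hc i hi) (hc j hj))
    (fun i hi j hj hji => hφc i hi ▸ even_of_mem_evenodd_of_lt hi hj hji (hc i hi))
  exact ⟨q, hq⟩

/-- If `b = b_k,…,b_0` is a witness for the play prefix `ρ = v_1,…,v_m`, then `ρ` contains an
even chain of length `val(b)`. -/
theorem witness_even_chain (lo hi : ℕ) (hlo : lo = 1 ∨ lo = 2) (hlohi : lo ≤ hi)
    (φ : V → ℕ) (hφ : ∀ x, φ x ∈ Set.Icc lo hi) (v : ℕ → V) (m : ℕ) (hm : 1 ≤ m)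
    (k : ℕ) (b : ℕ → Option ℕ) (hb : IsWitness lo hi φ v m k b) :
    ∃ q : ℕ → ℕ, IsEvenChain φ v m (valw k b) q :=
  witness_even_chain_general lo hi φ v m k b hb
end

section
/- Let e = |{v ∈ V : φ(v) is even}|. If a play prefix ρ = v_1,…,v_m contains an even chain of length strictly greater than e, then there exist indices 1 ≤ s < t ≤ m such that v_s = v_t and max{φ(v_r) : s ≤ r ≤ t} is even (i.e., ρ contains a cycle whose highest colour is even). -/
open scoped Classical

variable {V : Type*}

private lemma chain_strict_mono {φ : V → ℕ} {v : ℕ → V} {m ℓ : ℕ} {q : ℕ → ℕ}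
    (hq : IsEvenChain φ v m ℓ q) :
    ∀ a b, 1 ≤ a → a < b → b ≤ ℓ → q a < q b := by
  intro a b ha hab hb
  induction b with
  | zero => omega
  | succ b ih =>
    rcases Nat.lt_or_ge a b with h | h
    · exact lt_trans (ih h (by omega)) (hq.2.1 b (by omega) (by omega))
    · have : a = b := by omega
      subst this
      exact hq.2.1 a ha (by omega)

/-- If a play prefix `v_1,…,v_m` over a finite set of vertices contains an even chain whose
length exceeds the number `e` of vertices of even colour, then it contains a cycle whose
highest colour is even. -/
theorem long_even_chain_even_cycle [Fintype V] (φ : V → ℕ) (v : ℕ → V) (m : ℕ) (hm : 1 ≤ m)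
    (ℓ : ℕ) (q : ℕ → ℕ) (hq : IsEvenChain φ v m ℓ q)
    (hlong : Nat.card {x : V // Even (φ x)} < ℓ) :
    ∃ s t, 1 ≤ s ∧ s < t ∧ t ≤ m ∧ v s = v t ∧
      ∃ M, Even M ∧ (∀ r, s ≤ r → r ≤ t → φ (v r) ≤ M) ∧
        ∃ r, s ≤ r ∧ r ≤ t ∧ φ (v r) = M := by
  obtain ⟨hbnd, hinc, hev, hmax⟩ := hq
  have hℓ1 : 1 ≤ ℓ := by omega
  -- default element of the subtype
  have hd : Even (φ (v (q 1))) := hev 1 le_rfl hℓ1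
  set f : ℕ → {x : V // Even (φ x)} := fun j =>
    if h : 1 ≤ j ∧ j ≤ ℓ then ⟨v (q j), hev j h.1 h.2⟩ else ⟨v (q 1), hd⟩ with hf
  -- pigeonhole
  have hcard : (Finset.univ : Finset {x : V // Even (φ x)}).card < (Finset.Icc 1 ℓ).card := by
    simpa [Nat.card_eq_fintype_card] using hlong
  obtain ⟨j, hj, k, hk, hjk, hfeq⟩ :=
    Finset.exists_ne_map_eq_of_card_lt_of_maps_to hcard
      (fun j _ => Finset.mem_univ (f j))
  simp only [Finset.mem_Icc] at hj hk
  -- WLOG j < k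
  wlog hlt : j < k generalizing j k
  · exact this k j hjk.symm hfeq.symm hk hj (by omega)
  have hveq : v (q j) = v (q k) := by
    have h1 : f j = ⟨v (q j), hev j hj.1 hj.2⟩ := by simp [hf, hj.1, hj.2]
    have h2 : f k = ⟨v (q k), hev k hk.1 hk.2⟩ := by simp [hf, hk.1, hk.2]
    have := h1 ▸ h2 ▸ hfeq
    exact congrArg Subtype.val this
  have hqlt : q j < q k := chain_strict_mono ⟨hbnd, hinc, hev, hmax⟩ j k hj.1 hlt hk.2
  refine ⟨q j, q k, (hbnd j hj.1 hj.2).1, hqlt, (hbnd k hk.1 hk.2).2, hveq, ?_⟩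
  -- M = max colour among chain positions j..k
  have hne : (Finset.Icc j k).Nonempty := ⟨j, Finset.mem_Icc.mpr ⟨le_rfl, le_of_lt hlt⟩⟩
  set M := (Finset.Icc j k).sup' hne (fun i => φ (v (q i))) with hM
  obtain ⟨i0, hi0, hi0eq⟩ := Finset.exists_mem_eq_sup' hne (fun i => φ (v (q i)))
  simp only [Finset.mem_Icc] at hi0
  have hMe : M = φ (v (q i0)) := hM.trans hi0eq
  refine ⟨M, ?_, ?_, q i0, ?_, ?_, hMe.symm⟩
  · rw [hMe]; exact hev i0 (by omega) (by omega)
  · -- every colour in [q j, q k] is ≤ M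
    intro r hr1 hr2
    -- find i with j ≤ i < k, q i ≤ r ≤ q (i+1)
    have key : ∃ i, j ≤ i ∧ i < k ∧ q i ≤ r ∧ r ≤ q (i + 1) := by
      by_cases hrk : r = q k
      · exact ⟨k - 1, by omega, by omega, by
          subst hrk
          have := chain_strict_mono ⟨hbnd, hinc, hev, hmax⟩ (k-1) k (by omega) (by omega) hk.2
          omega, by rw [show k - 1 + 1 = k by omega]; omega⟩
      · -- take the largest i in [j,k] with q i ≤ r
        set S := (Finset.Icc j k).filter (fun i => q i ≤ r) with hS
        have hSne : S.Nonempty := ⟨j, by simp [hS, le_of_lt hlt, hr1]⟩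
        set i := S.max' hSne with hi
        have hiS : i ∈ S := S.max'_mem hSne
        simp only [hS, Finset.mem_filter, Finset.mem_Icc] at hiS
        have hik : i < k := by
          by_contra h
          have hik' : i = k := by omega
          rw [hik'] at hiS
          omega
        refine ⟨i, hiS.1.1, hik, hiS.2, ?_⟩
        by_contra hcon
        push_neg at hcon
        have : i + 1 ∈ S := by
          simp only [hS, Finset.mem_filter, Finset.mem_Icc]
          exact ⟨⟨by omega, by omega⟩, le_of_lt hcon⟩
        have := S.le_max' _ this
        omega
    obtain ⟨i, hji, hik, hqi, hqi1⟩ := key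
    have h1 : φ (v r) ≤ max (φ (v (q i))) (φ (v (q (i+1)))) :=
      hmax i (by omega) (by omega) r hqi hqi1
    have h2 : φ (v (q i)) ≤ M :=
      Finset.le_sup' (f := fun i => φ (v (q i))) (Finset.mem_Icc.mpr ⟨hji, le_of_lt hik⟩)
    have h3 : φ (v (q (i+1))) ≤ M :=
      Finset.le_sup' (f := fun i => φ (v (q i))) (Finset.mem_Icc.mpr ⟨by omega, by omega⟩)
    omega
  · rcases Nat.lt_or_ge j i0 with hc | hc
    · exact le_of_lt (chain_strict_mono ⟨hbnd, hinc, hev, hmax⟩ j i0 hj.1 hc (by omega))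
    · have hje : j = i0 := by omega
      exact hje ▸ le_rfl
  · rcases Nat.lt_or_ge i0 k with hc | hc
    · exact le_of_lt (chain_strict_mono ⟨hbnd, hinc, hev, hmax⟩ i0 k (by omega) hc hk.2)
    · have hke : i0 = k := by omega
      exact hke ▸ le_rfl
end

section
/- Suppose b = b_k,…,b_0 is a witness for ρ, d = φ(v_{m+1}) is even, and there exists an index j ≤ k such that: b_i is an even number for all i < j; b_j is odd or ⊥; and for all i > j, b_i ≥ d or b_i = ⊥. Define c by c_i = b_i for all i > j, c_j = d, and c_i = ⊥ for all i < j. Then c is a witness for ρ' = v_1,…,v_m,v_{m+1}. -/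
open scoped Classical

variable {V : Type*}

lemma exists_chain (φ : V → ℕ) (v : ℕ → V) (m k : ℕ) (b : ℕ → Option ℕ)
    (p : ℕ → ℕ → ℕ)
    (hw : ∀ i ≤ k, ∀ c, b i = some c →
        IsIWitAux φ v m (startIdx c) (2 ^ i) (p i) ∧ φ (v (p i (2 ^ i))) = c)
    (hord : ∀ i j, i < j → j ≤ k → ∀ ci cj, b i = some ci → b j = some cj →
        p j (2 ^ j) < p i (startIdx ci)) :
    ∀ j, j ≤ k → (∀ i < j, ∃ c, b i = some c ∧ Even c) →
    ∃ q : ℕ → ℕ, IsEvenChain φ v m (2 ^ j - 1) q ∧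
      (∀ t, q (2 ^ j - 1) < t → t ≤ m → φ (v t) ≤ φ (v (q (2 ^ j - 1)))) ∧
      (1 ≤ j → ∀ j', j ≤ j' → j' ≤ k → ∀ c', b j' = some c' → p j' (2 ^ j') < q 1) := by
  intro j
  induction j with
  | zero =>
    intro _ _
    refine ⟨fun _ => m, ⟨?_, ?_, ?_, ?_⟩, ?_, ?_⟩ <;> simp only [pow_zero]
    · intro t h1 h2; exact absurd (h1.trans h2) (by omega)
    · intro t h1 h2; exact absurd (h1.trans_lt h2) (by omega)
    · intro t h1 h2; exact absurd (h1.trans h2) (by omega)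
    · intro t h1 h2; exact absurd (h1.trans_lt h2) (by omega)
    · intro t h1 h2; exact absurd (h1.trans_le h2) (by omega)
    · intro h; exact absurd h (by omega)
  | succ j ih =>
    intro hjk hbelow
    obtain ⟨q, hq, hqout, hqfst⟩ := ih (by omega) (fun i hi => hbelow i (by omega))
    obtain ⟨cj, hbj, hcj⟩ := hbelow j (by omega)
    obtain ⟨hwj, hwjc⟩ := hw j (by omega) cj hbj
    have hsi : startIdx cj = 1 := by simp [startIdx, hcj]
    rw [hsi] at hwj
    obtain ⟨hbd, hinc, hev, hinn, hout⟩ := hwj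
    obtain ⟨qbd, qinc, qev, qinn⟩ := hq
    have hL1 : 1 ≤ 2 ^ j := Nat.one_le_pow j 2 (by norm_num)
    have hp2 : 2 ^ (j + 1) = 2 ^ j * 2 := pow_succ 2 j
    have hlen : 2 ^ (j + 1) - 1 = 2 ^ j + (2 ^ j - 1) := by omega
    have hjun : 2 ≤ 2 ^ j → p j (2 ^ j) < q 1 := by
      intro h2
      have hj1 : 1 ≤ j := by
        rcases Nat.eq_zero_or_pos j with rfl | h
        · simp at h2
        · exact h
      exact hqfst hj1 j le_rfl (by omega) cj hbj
    refine ⟨fun t => if t ≤ 2 ^ j then p j t else q (t - 2 ^ j), ?_, ?_, ?_⟩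
    · rw [hlen]
      refine ⟨?_, ?_, ?_, ?_⟩
      · intro t h1 h2
        by_cases ht : t ≤ 2 ^ j
        · simp only [if_pos ht]; exact hbd t h1 ht
        · simp only [if_neg ht]
          exact qbd (t - 2 ^ j) (by omega) (by omega)
      · intro t h1 h2
        by_cases ht : t + 1 ≤ 2 ^ j
        · simp only [if_pos (by omega : t ≤ 2 ^ j), if_pos ht]
          exact hinc t h1 (by omega)
        · by_cases ht2 : t ≤ 2 ^ j
          · have htL : t = 2 ^ j := by omega
            subst htL
            simp only [if_pos (le_refl (2 ^ j)), if_neg ht, Nat.add_sub_cancel_left]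
            exact hjun (by omega)
          · simp only [if_neg ht2, if_neg ht,
              (by omega : t + 1 - 2 ^ j = (t - 2 ^ j) + 1)]
            exact qinc (t - 2 ^ j) (by omega) (by omega)
      · intro t h1 h2
        by_cases ht : t ≤ 2 ^ j
        · simp only [if_pos ht]
          rcases eq_or_lt_of_le ht with heq | hlt
          · rw [heq, hwjc]; exact hcj
          · exact hev t h1 hlt
        · simp only [if_neg ht]
          exact qev (t - 2 ^ j) (by omega) (by omega)
      · intro t h1 h2 s hs1 hs2
        by_cases ht : t + 1 ≤ 2 ^ j
        · simp only [if_pos (by omega : t ≤ 2 ^ j), if_pos ht] at hs1 hs2 ⊢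
          exact hinn t h1 (by omega) s hs1 hs2
        · by_cases ht2 : t ≤ 2 ^ j
          · have htL : t = 2 ^ j := by omega
            subst htL
            simp only [if_pos (le_refl (2 ^ j)), if_neg ht,
              Nat.add_sub_cancel_left] at hs1 hs2 ⊢
            rcases eq_or_lt_of_le hs1 with heq | hlt
            · rw [← heq]; exact le_max_left _ _
            · have hq1m : q 1 ≤ m := (qbd 1 le_rfl (by omega)).2
              exact le_trans (hout s hlt (le_trans hs2 hq1m)) (le_max_left _ _)
          · simp only [if_neg ht2, if_neg ht,
              (by omega : t + 1 - 2 ^ j = (t - 2 ^ j) + 1)] at hs1 hs2 ⊢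
            exact qinn (t - 2 ^ j) (by omega) (by omega) s hs1 hs2
    · intro t h1 h2
      rcases eq_or_lt_of_le hL1 with h1L | h2L
      · have e : 2 ^ (j + 1) - 1 = 1 := by omega
        rw [e] at h1 ⊢
        simp only [if_pos (by omega : 1 ≤ 2 ^ j)] at h1 ⊢
        rw [← h1L] at hout
        exact hout t h1 h2
      · have e : ¬ (2 ^ (j + 1) - 1 ≤ 2 ^ j) := by omega
        have e2 : 2 ^ (j + 1) - 1 - 2 ^ j = 2 ^ j - 1 := by omega
        simp only [if_neg e, e2] at h1 ⊢
        exact hqout t h1 h2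
    · intro _ j' hj' hj'k c' hbj'
      have h := hord j j' (by omega) hj'k cj c' hbj hbj'
      rw [hsi] at h
      simpa only [if_pos hL1] using h

/-- Update lemma for an even colour `d = φ(v_{m+1})` (the `overflow' rule): if `b_i` is even
for all `i < j`, `b_j` is odd or blank, and `b_i ≥ d` or `b_i = ⊥` for all `i > j`, then
setting `c_i = b_i` for `i > j`, `c_j = d` and `c_i = ⊥` for `i < j` yields a witness for
`ρ' = v_1,…,v_m,v_{m+1}`. -/
theorem witness_update_overflow (lo hi : ℕ) (hlo : lo = 1 ∨ lo = 2) (hlohi : lo ≤ hi)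
    (φ : V → ℕ) (hφ : ∀ x, φ x ∈ Set.Icc lo hi) (v : ℕ → V) (m : ℕ) (hm : 1 ≤ m)
    (k : ℕ) (b : ℕ → Option ℕ) (hb : IsWitness lo hi φ v m k b)
    (hd : Even (φ (v (m + 1))))
    (j : ℕ) (hj : j ≤ k)
    (hbelow : ∀ i < j, ∃ c, b i = some c ∧ Even c)
    (hatj : b j = none ∨ ∃ c, b j = some c ∧ Odd c)
    (habove : ∀ i, j < i → i ≤ k → b i = none ∨ ∃ c, b i = some c ∧ φ (v (m + 1)) ≤ c) :
    IsWitness lo hi φ v (m + 1) k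
      (fun i => if j < i then b i else if i = j then some (φ (v (m + 1))) else none) := by
  obtain ⟨hcm, hb0, p, hw, hord⟩ := hb
  obtain ⟨q, hq, hqout, hqfst⟩ := exists_chain φ v m k b p hw hord j hj hbelow
  obtain ⟨qbd, qinc, qev, qinn⟩ := hq
  have hL1 : 1 ≤ 2 ^ j := Nat.one_le_pow j 2 (by norm_num)
  have hsd : startIdx (φ (v (m + 1))) = 1 := by simp [startIdx, hd]
  refine ⟨?_, ?_, ?_⟩
  · intro i hik c hc
    dsimp only at hc
    by_cases h1 : j < i
    · rw [if_pos h1] at hc; exact hcm i hik c hc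
    · rw [if_neg h1] at hc
      by_cases h2 : i = j
      · rw [if_pos h2] at hc
        injection hc with hc
        obtain ⟨hφ1, hφ2⟩ := hφ (v (m + 1))
        refine ⟨by omega, by omega, ?_⟩
        rcases Nat.even_or_odd hi with he | ho
        · exact Or.inl he
        · refine Or.inr ?_
          intro hch
          rw [hc, hch] at hd
          exact (Nat.not_even_iff_odd.mpr ho) hd
      · rw [if_neg h2] at hc; exact absurd hc (by simp)
  · intro c hc
    dsimp only at hc
    rw [if_neg (by omega : ¬ j < 0)] at hc
    by_cases h2 : 0 = j
    · rw [if_pos h2] at hc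
      injection hc with hc
      rw [← hc]; exact hd
    · rw [if_neg h2] at hc; exact absurd hc (by simp)
  · refine ⟨fun i => if i = j then (fun t => if t < 2 ^ j then q t else m + 1) else p i,
      ?_, ?_⟩
    · intro i hik c hc
      dsimp only at hc ⊢
      by_cases hij : j < i
      · rw [if_pos hij] at hc
        rw [if_neg (by omega : ¬ i = j)]
        obtain ⟨hwi, hwic⟩ := hw i hik c hc
        obtain ⟨ibd, iinc, iev, iinn, iout⟩ := hwi
        have hdc : φ (v (m + 1)) ≤ c := by
          rcases habove i hij hik with h | ⟨c', hc', hdc⟩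
          · rw [h] at hc; exact absurd hc (by simp)
          · rw [hc'] at hc; injection hc with hc; rw [← hc]; exact hdc
        refine ⟨⟨?_, iinc, iev, iinn, ?_⟩, hwic⟩
        · intro t h1 h2; have := ibd t h1 h2; omega
        · intro t h1 h2
          rcases Nat.lt_or_ge t (m + 1) with h | h
          · exact iout t h1 (by omega)
          · have ht : t = m + 1 := by omega
            rw [ht, hwic]
            exact hdc
      · rw [if_neg hij] at hc
        by_cases hij2 : i = j
        · subst hij2
          rw [if_pos rfl] at hc
          injection hc with hc
          rw [if_pos rfl, ← hc, hsd]
          refine ⟨⟨?_, ?_, ?_, ?_, ?_⟩, ?_⟩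
          · intro t h1 h2
            by_cases ht : t < 2 ^ i
            · simp only [if_pos ht]
              have := qbd t h1 (by omega); omega
            · simp only [if_neg ht]; omega
          · intro t h1 h2
            by_cases ht : t + 1 < 2 ^ i
            · simp only [if_pos (show t < 2 ^ i by omega), if_pos ht]
              exact qinc t h1 (by omega)
            · simp only [if_pos (show t < 2 ^ i by omega), if_neg ht]
              have := qbd t h1 (by omega); omega
          · intro t h1 h2
            simp only [if_pos h2]
            exact qev t h1 (by omega)
          · intro t h1 h2 s hs1 hs2
            simp only [if_pos h2] at hs1 ⊢
            by_cases ht : t + 1 < 2 ^ i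
            · simp only [if_pos ht] at hs2 ⊢
              exact qinn t h1 (by omega) s hs1 hs2
            · simp only [if_neg ht] at hs2 ⊢
              have hteq : t = 2 ^ i - 1 := by omega
              rcases eq_or_lt_of_le hs1 with heq | hlt
              · rw [← heq]; exact le_max_left _ _
              · rcases Nat.lt_or_ge s (m + 1) with hsm | hsm
                · rw [hteq] at hlt
                  have hle := hqout s hlt (by omega)
                  rw [← hteq] at hle
                  exact le_trans hle (le_max_left _ _)
                · have hs : s = m + 1 := by omega
                  rw [hs]
                  exact le_max_right _ _
          · intro t h1 h2
            simp only [if_neg (lt_irrefl (2 ^ i))] at h1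
            exact absurd (h1.trans_le h2) (lt_irrefl _)
          · simp only [if_neg (lt_irrefl (2 ^ i))]
        · rw [if_neg hij2] at hc; exact absurd hc (by simp)
    · intro i i' hii' hi'k ci ci' hci hci'
      dsimp only at hci hci' ⊢
      by_cases hij : j < i
      · rw [if_pos hij] at hci
        rw [if_pos (by omega : j < i')] at hci'
        rw [if_neg (by omega : ¬ i = j), if_neg (by omega : ¬ i' = j)]
        exact hord i i' hii' hi'k ci ci' hci hci'
      · by_cases hij2 : i = j
        · subst hij2
          rw [if_neg hij, if_pos rfl] at hci
          injection hci with hci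
          rw [if_pos hii'] at hci'
          rw [if_neg (by omega : ¬ i' = i), if_pos rfl, ← hci, hsd]
          by_cases h1 : 1 < 2 ^ i
          · simp only [if_pos h1]
            have hi1 : 1 ≤ i := by
              rcases Nat.eq_zero_or_pos i with rfl | h
              · simp at h1
              · exact h
            exact hqfst hi1 i' (by omega) hi'k ci' hci'
          · simp only [if_neg h1]
            have hst : startIdx ci' ≤ 1 := by unfold startIdx; split <;> omega
            obtain ⟨i'bd, _⟩ := (hw i' hi'k ci' hci').1
            have hb2 := i'bd (2 ^ i')
              (le_trans hst (Nat.one_le_pow _ 2 (by norm_num))) le_rfl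
            omega
        · rw [if_neg hij, if_neg hij2] at hci
          exact absurd hci (by simp)
end

section
/- Suppose b = b_k,…,b_0 is a witness for ρ, d = φ(v_{m+1}) ∈ C⁻, and there exists an index j ≤ k such that b_j ≠ ⊥, d > b_j, and for all i > j, b_i ≥ d or b_i = ⊥. Define c by c_i = b_i for all i > j, c_j = d if j ≠ 0 and c_j = ⊥ if j = 0, and c_i = ⊥ for all i < j. Then c is a witness for ρ' = v_1,…,v_m,v_{m+1}. -/
open scoped Classical

variable {V : Type*}

/-- Monotonicity of the positions of a witness. -/
lemma IsIWitAux.mono {φ : V → ℕ} {v : ℕ → V} {m lo' len : ℕ} {p : ℕ → ℕ}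
    (h : IsIWitAux φ v m lo' len p) {a c : ℕ} (ha : lo' ≤ a) (hac : a ≤ c) (hc : c ≤ len) :
    p a ≤ p c := by
  induction c with
  | zero => have : a = 0 := by omega
            simp [this]
  | succ n ih =>
    rcases Nat.lt_or_ge a (n + 1) with hlt | hge
    · have h1 : p n < p (n + 1) := h.2.1 n (by omega) (by omega)
      have h2 : p a ≤ p n := ih (by omega) (by omega)
      omega
    · have : a = n + 1 := by omega
      simp [this]

/-- Local update lemma for a colour `d = φ(v_{m+1}) ∈ C⁻`: if there is an index `j` with
`b_j ≠ ⊥`, `d > b_j`, and `b_i ≥ d` or `b_i = ⊥` for all `i > j`, then setting `c_i = b_i`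
for `i > j`, `c_j = d` if `j ≠ 0` (and `c_j = ⊥` if `j = 0`), and `c_i = ⊥` for `i < j`
yields a witness for `ρ' = v_1,…,v_m,v_{m+1}`. -/
theorem witness_update_local (lo hi : ℕ) (hlo : lo = 1 ∨ lo = 2) (hlohi : lo ≤ hi)
    (φ : V → ℕ) (hφ : ∀ x, φ x ∈ Set.Icc lo hi) (v : ℕ → V) (m : ℕ) (hm : 1 ≤ m)
    (k : ℕ) (b : ℕ → Option ℕ) (hb : IsWitness lo hi φ v m k b)
    (hd : CminusMem lo hi (φ (v (m + 1))))
    (j : ℕ) (hj : j ≤ k)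
    (hatj : ∃ c, b j = some c ∧ c < φ (v (m + 1)))
    (habove : ∀ i, j < i → i ≤ k → b i = none ∨ ∃ c, b i = some c ∧ φ (v (m + 1)) ≤ c) :
    IsWitness lo hi φ v (m + 1) k
      (fun i => if j < i then b i
                else if i = j ∧ j ≠ 0 then some (φ (v (m + 1))) else none) := by
  obtain ⟨hmem, _hzero, p, hwit, hord⟩ := hb
  obtain ⟨cj, hbj, hcjd⟩ := hatj
  set d := φ (v (m + 1)) with hd_def
  set s := startIdx cj with hs_def
  have hs01 : s = 0 ∨ s = 1 := by
    rw [hs_def]; unfold startIdx; split <;> simp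
  have hsd01 : startIdx d = 0 ∨ startIdx d = 1 := by
    unfold startIdx; split <;> simp
  obtain ⟨hwj, hcolj⟩ := hwit j hj cj hbj
  obtain ⟨hrange, hmono, heven, hinner, houter⟩ := hwj
  set q := p j with hq_def
  -- evenness including the endpoint when cj is even
  have heven' : ∀ i', s ≤ i' → i' < 2 ^ j + s → Even (φ (v (q i'))) := by
    intro i' h1 h2
    rcases Nat.lt_or_ge i' (2 ^ j) with h | h
    · exact heven i' h1 h
    · have hi' : i' = 2 ^ j := by omega
      have hs1 : s = 1 := by omega
      have : Even cj := by
        rw [hs_def] at hs1; unfold startIdx at hs1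
        by_contra hne; simp [hne] at hs1
      rw [hi', hcolj]; exact this
  -- the new witness at index j
  set r : ℕ → ℕ := fun i' => if i' = 2 ^ j then m + 1 else q (i' + s) with hr_def
  set P : ℕ → ℕ → ℕ := fun i => if i = j then r else p i with hP_def
  have hIsWjAux : IsIWitAux φ v m s (2 ^ j) q := ⟨hrange, hmono, heven, hinner, houter⟩
  have hqmono : ∀ a c, s ≤ a → a ≤ c → c ≤ 2 ^ j → q a ≤ q c := by
    intro a c h1 h2 h3; exact hIsWjAux.mono h1 h2 h3
  have hpow : 1 ≤ 2 ^ j := Nat.one_le_two_pow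
  refine ⟨?_, ?_, P, ?_, ?_⟩
  · -- colour membership
    intro i hik c hc
    simp only at hc
    by_cases h1 : j < i
    · simp only [if_pos h1] at hc; exact hmem i hik c hc
    · simp only [if_neg h1] at hc
      by_cases h2 : i = j ∧ j ≠ 0
      · simp only [if_pos h2] at hc
        injection hc with hc; rw [← hc]; exact hd
      · simp [h2] at hc
  · -- b' 0 is not some
    intro c hc
    simp only at hc
    have h1 : ¬ (j < 0) := by omega
    rw [if_neg h1] at hc
    by_cases h2 : (0 = j ∧ j ≠ 0)
    · omega
    · simp [h2] at hc
  · -- each entry has a witness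
    intro i hik c hc
    simp only at hc
    by_cases h1 : j < i
    · -- unchanged entries: old witness still works, since d ≤ c
      simp only [if_pos h1] at hc
      have hne : i ≠ j := by omega
      obtain ⟨⟨hr1, hr2, hr3, hr4, hr5⟩, hcol⟩ := hwit i hik c hc
      have hdc : d ≤ c := by
        rcases habove i h1 hik with h | ⟨c', hc', hdc'⟩
        · rw [h] at hc; exact absurd hc (by simp)
        · rw [hc'] at hc; injection hc with hc; omega
      have hPi : P i = p i := by simp [hP_def, hne]
      rw [hPi]
      refine ⟨⟨?_, hr2, hr3, hr4, ?_⟩, hcol⟩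
      · intro j' hj1 hj2
        have := hr1 j' hj1 hj2; omega
      · intro t ht1 ht2
        rcases Nat.lt_or_ge m t with h | h
        · have : t = m + 1 := by omega
          rw [this, hcol]; exact hdc
        · exact hr5 t ht1 h
    · simp only [if_neg h1] at hc
      by_cases h2 : i = j ∧ j ≠ 0
      · -- the new witness at index j
        simp only [if_pos h2] at hc
        injection hc with hc
        obtain ⟨hij, hj0⟩ := h2
        subst hij
        have hpow2 : 2 ≤ 2 ^ i := by
          calc 2 = 2 ^ 1 := rfl
          _ ≤ 2 ^ i := Nat.pow_le_pow_right (by norm_num) (by omega)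
        simp only [hP_def, if_pos rfl, ← hc]
        have hr_last : r (2 ^ i) = m + 1 := by simp [hr_def]
        have hr_other : ∀ i', i' < 2 ^ i → r i' = q (i' + s) := by
          intro i' h; simp [hr_def, Nat.ne_of_lt h]
        constructor
        · refine ⟨?_, ?_, ?_, ?_, ?_⟩
          · -- ranges
            intro j' h1 h2
            rcases Nat.lt_or_ge j' (2 ^ i) with h | h
            · rw [hr_other j' h]
              have := hrange (j' + s) (by omega) (by omega)
              omega
            · have : j' = 2 ^ i := by omega
              rw [this, hr_last]; omega
          · -- strictly increasing
            intro j' h1 h2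
            rcases Nat.lt_or_ge (j' + 1) (2 ^ i) with h | h
            · rw [hr_other j' (by omega), hr_other (j' + 1) h]
              have : j' + 1 + s = j' + s + 1 := by omega
              rw [this]
              exact hmono (j' + s) (by omega) (by omega)
            · have hj'1 : j' + 1 = 2 ^ i := by omega
              rw [hr_other j' (by omega), hj'1, hr_last]
              have := hrange (j' + s) (by omega) (by omega)
              omega
          · -- evenness
            intro j' h1 h2
            rw [hr_other j' h2]
            exact heven' (j' + s) (by omega) (by omega)
          · -- inner domination
            intro j' h1 h2 t ht1 ht2
            rcases Nat.lt_or_ge (j' + 1) (2 ^ i) with h | h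
            · have he : j' + 1 + s = j' + s + 1 := by omega
              rw [hr_other j' (by omega), hr_other (j' + 1) h, he]
              rw [hr_other j' (by omega)] at ht1
              rw [hr_other (j' + 1) h, he] at ht2
              exact hinner (j' + s) (by omega) (by omega) t ht1 ht2
            · have hj'1 : j' + 1 = 2 ^ i := by omega
              rw [hr_other j' (by omega), hj'1, hr_last]
              rw [hr_other j' (by omega)] at ht1
              rw [hj'1, hr_last] at ht2
              -- t ranges over [q (j' + s), m + 1]
              rcases Nat.lt_or_ge m t with hx | hx
              · have : t = m + 1 := by omega
                rw [this]
                exact le_max_of_le_right le_rfl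
              · -- t ≤ m
                rcases Nat.lt_or_ge (q (2 ^ i)) t with hy | hy
                · -- beyond the last old position: outer domination
                  have := houter t hy hx
                  rw [hcolj] at this
                  exact le_max_of_le_right (by omega)
                · -- t ≤ q (2 ^ i)
                  rcases hs01 with hs0 | hs1
                  · -- s = 0 : use old inner domination at index 2^i - 1
                    have he1 : j' + s = 2 ^ i - 1 := by omega
                    have he2 : (2 ^ i - 1) + 1 = 2 ^ i := by omega
                    have := hinner (2 ^ i - 1) (by omega) (by omega) t
                      (by rw [← he1]; exact ht1) (by rw [he2]; exact hy)
                    rw [he2, hcolj] at this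
                    rw [he1]
                    rcases le_max_iff.mp this with hz | hz
                    · exact le_max_of_le_left hz
                    · exact le_max_of_le_right (by omega)
                  · -- s = 1 : then q (j' + s) = q (2^i), so t = q (2^i)
                    have he1 : j' + s = 2 ^ i := by omega
                    rw [he1] at ht1
                    have : t = q (2 ^ i) := by omega
                    rw [this, hcolj]
                    exact le_max_of_le_right (by omega)
          · -- outer domination: vacuous
            intro t ht1 ht2
            rw [hr_last] at ht1; omega
        · rw [hr_last]
      · simp [h2] at hc
  · -- ordering between witnesses
    intro i i' hii' hi'k ci ci' hci hci'
    simp only at hci hci'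
    by_cases h1 : j < i
    · have hji' : j < i' := by omega
      rw [if_pos h1] at hci
      rw [if_pos hji'] at hci'
      simp only [hP_def, if_neg (by omega : i ≠ j), if_neg (by omega : i' ≠ j)]
      exact hord i i' hii' hi'k ci ci' hci hci'
    · rw [if_neg h1] at hci
      by_cases h2 : i = j ∧ j ≠ 0
      · obtain ⟨he, hj0⟩ := h2
        subst he
        rw [if_pos ⟨rfl, hj0⟩] at hci
        injection hci with hci
        rw [if_pos hii'] at hci'
        simp only [hP_def, if_pos rfl, if_neg (by omega : i' ≠ i)]
        have hpow2 : 2 ≤ 2 ^ i := by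
          calc 2 = 2 ^ 1 := rfl
          _ ≤ 2 ^ i := Nat.pow_le_pow_right (by norm_num) (by omega)
        have hsci : startIdx ci = 0 ∨ startIdx ci = 1 := by
          unfold startIdx; split <;> simp
        have hsdlt : startIdx ci < 2 ^ i := by omega
        have hrs : r (startIdx ci) = q (startIdx ci + s) := by
          simp [hr_def, Nat.ne_of_lt hsdlt]
        rw [hrs]
        have hold := hord i i' hii' hi'k cj ci' hbj hci'
        rw [← hq_def, ← hs_def] at hold
        have : q s ≤ q (startIdx ci + s) :=
          hqmono s (startIdx ci + s) le_rfl (by omega) (by omega)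
        omega
      · simp [h2] at hci
end

section
/- Suppose b = b_k,…,b_0 is a witness for ρ, d = φ(v_{m+1}) ∈ C⁻ is odd, and for every j ≤ k, either b_j = ⊥ or b_j ≥ d. Then b itself is a witness for ρ' = v_1,…,v_m,v_{m+1}. -/
open scoped Classical

variable {V : Type*}

/-- Stale update lemma for an odd colour `d = φ(v_{m+1}) ∈ C⁻`: if for all `j ≤ k` either
`b_j = ⊥` or `b_j ≥ d`, then `b` itself is a witness for `ρ' = v_1,…,v_m,v_{m+1}`. -/
theorem witness_update_stale (lo hi : ℕ) (hlo : lo = 1 ∨ lo = 2) (hlohi : lo ≤ hi)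
    (φ : V → ℕ) (hφ : ∀ x, φ x ∈ Set.Icc lo hi) (v : ℕ → V) (m : ℕ) (hm : 1 ≤ m)
    (k : ℕ) (b : ℕ → Option ℕ) (hb : IsWitness lo hi φ v m k b)
    (hdodd : Odd (φ (v (m + 1)))) (hd : CminusMem lo hi (φ (v (m + 1))))
    (hge : ∀ j ≤ k, b j = none ∨ ∃ c, b j = some c ∧ φ (v (m + 1)) ≤ c) :
    IsWitness lo hi φ v (m + 1) k b := by
  obtain ⟨h1, h2, p, h3, h4⟩ := hb
  refine ⟨h1, h2, p, ?_, h4⟩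
  intro i hi' c hc
  obtain ⟨⟨hw1, hw2, hw3, hw4, hw5⟩, hw6⟩ := h3 i hi' c hc
  refine ⟨⟨fun j hj hj' => ⟨(hw1 j hj hj').1, le_trans (hw1 j hj hj').2 (Nat.le_succ m)⟩,
    hw2, hw3, hw4, ?_⟩, hw6⟩
  intro t ht ht'
  rcases Nat.lt_or_ge t (m + 1) with h | h
  · exact hw5 t ht (Nat.lt_succ_iff.mp h)
  · have he : t = m + 1 := le_antisymm ht' h
    subst he
    rcases hge i hi' with hnone | ⟨c', hc', hle⟩
    · rw [hnone] at hc; exact absurd hc (by simp)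
    · rw [hc] at hc'; injection hc' with e; rw [hw6]; omega
end

section
/- For all sequences b and c of length k+1 over C_⊥ and every colour d ∈ C: if b = ↓₁c, then ↓₁ru'(b,d) = ↓₁ru'(c,d); that is, the concise raw update of the truncation of c equals the truncation of the classic raw update of c. -/
open scoped Classical

/-- The truncation `↓₁b`: for each odd colour, all occurrences other than the leftmost
(highest-index, among indices `≤ k`) one are replaced by `⊥`. -/
noncomputable def trunc (k : ℕ) (b : ℕ → Option ℕ) : ℕ → Option ℕ := fun i =>
  match b i with
  | none => none
  | some o => if Odd o ∧ ∃ i', i < i' ∧ i' ≤ k ∧ b i' = some o then none else some o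

/-- The classic raw update `ru'(b,d)` of a witness `b = b_k,…,b_0` over `C_⊥` (with
`C = {lo,…,hi}`) upon reading a vertex of colour `d`. -/
noncomputable def ruC (k hi : ℕ) (b : ℕ → Option ℕ) (d : ℕ) : ℕ → Option ℕ :=
  if Odd d ∧ d = hi then fun _ => none
  else if (Odd d ∧ ∀ i ≤ k, b i = none ∨ ∃ c, b i = some c ∧ d ≤ c)
       ∨ (Even d ∧ ∀ i ≤ k, ∃ c, b i = some c ∧ Even c ∧ d ≤ c) then b
  else if Odd d then
    let j := Nat.findGreatest (fun j' => ∃ c, b j' = some c ∧ c < d) k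
    fun i => if j < i then b i else if i = j ∧ j ≠ 0 then some d else none
  else
    let j0 := Nat.findGreatest (fun j' => ∃ c, b j' = some c ∧ c < d) k
    let j1 := if h : ∃ j', j' ≤ k ∧ ¬ ∃ c, b j' = some c ∧ Even c then Nat.find h else 0
    let j := max j0 j1
    fun i => if j < i then b i else if i = j then some d else none

/-!
Call `f` an odd thinning of `g` if `f` arises from `g` by blanking out odd entries, but never the
leftmost occurrence of an odd colour. `↓₁g` is an odd thinning of `g`, and all odd thinnings of
`g` have the truncation of `g`. The classic raw update depends on its argument only through the
colours that occur, the highest position holding a colour `< d` (a leftmost occurrence) and the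
lowest position not holding an even colour, all of which an odd thinning preserves. Apart from
the trivial cases, the update keeps the entries above a cut and overwrites those below it by
values independent of its argument, so it turns odd thinnings into odd thinnings.
-/

theorem Nat.findGreatest_le_findGreatest {P Q : ℕ → Prop} [DecidablePred P] [DecidablePred Q]
    {k : ℕ} (h : ∀ n ≤ k, P n → ∃ m, n ≤ m ∧ m ≤ k ∧ Q m) :
    Nat.findGreatest P k ≤ Nat.findGreatest Q k := by
  rcases eq_or_ne (Nat.findGreatest P k) 0 with h0 | h0
  · exact h0 ▸ Nat.zero_le _
  · obtain ⟨m, hnm, hmk, hQ⟩ := h _ (Nat.findGreatest_le k) (Nat.findGreatest_of_ne_zero rfl h0)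
    exact hnm.trans (Nat.le_findGreatest hmk hQ)

theorem trunc_eq_some_iff {k i a : ℕ} {g : ℕ → Option ℕ} :
    trunc k g i = some a ↔
      g i = some a ∧ (Odd a → ¬ ∃ i', i < i' ∧ i' ≤ k ∧ g i' = some a) := by
  rcases hgi : g i with _ | b
  · simp [trunc, hgi]
  · by_cases hb : Odd b ∧ ∃ i', i < i' ∧ i' ≤ k ∧ g i' = some b
    · simp only [trunc, hgi, if_pos hb]
      grind
    · simp only [trunc, hgi, if_neg hb]
      grind

structure OddThinning (k : ℕ) (f g : ℕ → Option ℕ) : Prop where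
  right_eq_some : ∀ i ≤ k, ∀ a, f i = some a → g i = some a
  left_eq_some_of_even : ∀ i ≤ k, ∀ a, Even a → g i = some a → f i = some a
  exists_ge_of_odd : ∀ i ≤ k, ∀ a, Odd a → g i = some a →
    ∃ i', i ≤ i' ∧ i' ≤ k ∧ f i' = some a ∧ g i' = some a

namespace OddThinning

variable {k : ℕ} {f g : ℕ → Option ℕ}

theorem refl (k : ℕ) (f : ℕ → Option ℕ) : OddThinning k f f :=
  ⟨fun _ _ _ h => h, fun _ _ _ _ h => h, fun i hi _ _ h => ⟨i, le_rfl, hi, h, h⟩⟩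

theorem exists_ge (h : OddThinning k f g) {i a : ℕ} (hi : i ≤ k) (hg : g i = some a) :
    ∃ i', i ≤ i' ∧ i' ≤ k ∧ f i' = some a := by
  rcases Nat.even_or_odd a with ha | ha
  · exact ⟨i, le_rfl, hi, h.left_eq_some_of_even i hi a ha hg⟩
  · obtain ⟨i', hii', hi'k, hf, -⟩ := h.exists_ge_of_odd i hi a ha hg
    exact ⟨i', hii', hi'k, hf⟩

theorem forall_some_iff (h : OddThinning k f g) (P : ℕ → Prop) :
    (∀ i ≤ k, ∀ a, f i = some a → P a) ↔ (∀ i ≤ k, ∀ a, g i = some a → P a) := by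
  refine ⟨fun hf i hi a hg => ?_, fun hg i hi a hf => hg i hi a (h.right_eq_some i hi a hf)⟩
  obtain ⟨i', -, hi'k, hfi'⟩ := h.exists_ge hi hg
  exact hf i' hi'k a hfi'

theorem exists_even_iff (h : OddThinning k f g) {i : ℕ} (hi : i ≤ k) (P : ℕ → Prop) :
    (∃ a, f i = some a ∧ Even a ∧ P a) ↔ (∃ a, g i = some a ∧ Even a ∧ P a) :=
  ⟨fun ⟨a, hf, ha, hP⟩ => ⟨a, h.right_eq_some i hi a hf, ha, hP⟩,
    fun ⟨a, hg, ha, hP⟩ => ⟨a, h.left_eq_some_of_even i hi a ha hg, ha, hP⟩⟩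

theorem findGreatest_eq (h : OddThinning k f g) (P : ℕ → Prop) [DecidablePred P] :
    Nat.findGreatest (fun j => ∃ a, f j = some a ∧ P a) k =
      Nat.findGreatest (fun j => ∃ a, g j = some a ∧ P a) k := by
  refine le_antisymm (Nat.findGreatest_le_findGreatest ?_) (Nat.findGreatest_le_findGreatest ?_)
  · rintro n hn ⟨a, hf, hP⟩
    exact ⟨n, le_rfl, hn, a, h.right_eq_some n hn a hf, hP⟩
  · rintro n hn ⟨a, hg, hP⟩
    obtain ⟨m, hnm, hmk, hf⟩ := h.exists_ge hn hg
    exact ⟨m, hnm, hmk, a, hf, hP⟩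

theorem find_not_even_eq (h : OddThinning k f g) :
    (if h : ∃ j, j ≤ k ∧ ¬ ∃ a, f j = some a ∧ Even a then Nat.find h else 0) =
      (if h : ∃ j, j ≤ k ∧ ¬ ∃ a, g j = some a ∧ Even a then Nat.find h else 0) := by
  have hiff : ∀ j, (j ≤ k ∧ ¬ ∃ a, f j = some a ∧ Even a) ↔
      (j ≤ k ∧ ¬ ∃ a, g j = some a ∧ Even a) := fun _ =>
    and_congr_right fun hj => not_congr (by simpa using h.exists_even_iff hj (fun _ => True))
  have hex := exists_congr hiff
  by_cases hf : ∃ j, j ≤ k ∧ ¬ ∃ a, f j = some a ∧ Even a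
  · rw [dif_pos hf, dif_pos (hex.mp hf)]
    exact Nat.find_congr' (hiff _)
  · rw [dif_neg hf, dif_neg (hex.not.mp hf)]

theorem splice (h : OddThinning k f g) (j : ℕ) (e : ℕ → Option ℕ) :
    OddThinning k (fun i => if j < i then f i else e i) (fun i => if j < i then g i else e i) := by
  refine ⟨fun i hi a => ?_, fun i hi a ha => ?_, fun i hi a ha => ?_⟩
  · split_ifs
    exacts [h.right_eq_some i hi a, id]
  · split_ifs
    exacts [h.left_eq_some_of_even i hi a ha, id]
  · split_ifs with hji
    · intro hg
      obtain ⟨i', hii', hi'k, hf, hg'⟩ := h.exists_ge_of_odd i hi a ha hg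
      have hji' : j < i' := hji.trans_le hii'
      exact ⟨i', hii', hi'k, by simpa [hji'] using hf, by simpa [hji'] using hg'⟩
    · intro he
      exact ⟨i, le_rfl, hi, by simpa [hji] using he, by simpa [hji] using he⟩

theorem exists_gt_iff (h : OddThinning k f g) {i a : ℕ} (ha : Odd a) :
    (∃ i', i < i' ∧ i' ≤ k ∧ f i' = some a) ↔ (∃ i', i < i' ∧ i' ≤ k ∧ g i' = some a) := by
  refine ⟨fun ⟨i', hii', hi'k, hf⟩ => ⟨i', hii', hi'k, h.right_eq_some i' hi'k a hf⟩, ?_⟩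
  rintro ⟨i', hii', hi'k, hg⟩
  obtain ⟨i'', hi'i'', hi''k, hf, -⟩ := h.exists_ge_of_odd i' hi'k a ha hg
  exact ⟨i'', hii'.trans_le hi'i'', hi''k, hf⟩

theorem trunc_eq (h : OddThinning k f g) : ∀ i ≤ k, trunc k f i = trunc k g i := by
  intro i hi
  rcases hg : g i with _ | a
  · have hf : f i = none := Option.eq_none_iff_forall_ne_some.mpr fun a hf => by
      simpa [hg] using h.right_eq_some i hi a hf
    simp [trunc, hf, hg]
  rcases Nat.even_or_odd a with ha | ha
  · simp [trunc, hg, h.left_eq_some_of_even i hi a ha hg, Nat.not_odd_iff_even.mpr ha]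
  rcases hf : f i with _ | a'
  · -- the entry survives in `f` only further left, so it is not the leftmost one in `g`
    obtain ⟨i', hii'le, hi'k, hfi', hgi'⟩ := h.exists_ge_of_odd i hi a ha hg
    have hii' : i < i' := hii'le.lt_of_ne (by rintro rfl; simp [hf] at hfi')
    have hdup : ∃ i', i < i' ∧ i' ≤ k ∧ g i' = some a := ⟨i', hii', hi'k, hgi'⟩
    simp [trunc, hf, hg, ha, hdup]
  · obtain rfl : a = a' := by simpa [hg] using h.right_eq_some i hi a' hf
    simp only [trunc, hf, hg, h.exists_gt_iff ha]

theorem of_eq_trunc (hfg : ∀ i ≤ k, f i = trunc k g i) : OddThinning k f g := by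
  refine ⟨fun i hi a hf => ?_, fun i hi a ha hg => ?_, fun i hi a ha hg => ?_⟩
  · exact (trunc_eq_some_iff.mp (hfg i hi ▸ hf)).1
  · rw [hfg i hi, trunc_eq_some_iff]
    exact ⟨hg, fun hodd => absurd ha (Nat.not_even_iff_odd.mpr hodd)⟩
  · set m := Nat.findGreatest (fun i' => g i' = some a) k
    have hgm : g m = some a := Nat.findGreatest_spec (P := fun i' => g i' = some a) hi hg
    have hmk : m ≤ k := Nat.findGreatest_le k
    refine ⟨m, Nat.le_findGreatest hi hg, hmk, ?_, hgm⟩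
    rw [hfg m hmk, trunc_eq_some_iff]
    exact ⟨hgm, fun _ ⟨i', hmi', hi'k, hgi'⟩ => Nat.findGreatest_is_greatest hmi' hi'k hgi'⟩

theorem forall_none_or_ge_iff (h : OddThinning k f g) (d : ℕ) :
    (∀ i ≤ k, f i = none ∨ ∃ a, f i = some a ∧ d ≤ a) ↔
      (∀ i ≤ k, g i = none ∨ ∃ a, g i = some a ∧ d ≤ a) := by
  have hopt : ∀ x : Option ℕ, (x = none ∨ ∃ a, x = some a ∧ d ≤ a) ↔ ∀ a, x = some a → d ≤ a := by
    rintro (_ | x) <;> simp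
  simpa only [hopt] using h.forall_some_iff (d ≤ ·)

theorem forall_even_ge_iff (h : OddThinning k f g) (d : ℕ) :
    (∀ i ≤ k, ∃ a, f i = some a ∧ Even a ∧ d ≤ a) ↔
      (∀ i ≤ k, ∃ a, g i = some a ∧ Even a ∧ d ≤ a) :=
  forall₂_congr fun _ hi => h.exists_even_iff hi (d ≤ ·)

theorem ruC (h : OddThinning k f g) (hi d : ℕ) :
    OddThinning k (ruC k hi f d) (ruC k hi g d) := by
  unfold _root_.ruC
  simp only [h.forall_none_or_ge_iff, h.forall_even_ge_iff]
  rw [h.findGreatest_eq (· < d), h.find_not_even_eq]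
  split_ifs
  · exact refl k _
  · exact h
  all_goals exact h.splice _ _

end OddThinning

theorem trunc_ruC_eq_general (hi : ℕ) (k : ℕ) (c : ℕ → Option ℕ)
    (b : ℕ → Option ℕ) (hbc : ∀ i ≤ k, b i = trunc k c i)
    (d : ℕ) :
    ∀ i ≤ k, trunc k (ruC k hi b d) i = trunc k (ruC k hi c d) i :=
  ((OddThinning.of_eq_trunc hbc).ruC hi d).trunc_eq

/-- If `b = ↓₁c` (on the indices `0,…,k` of the sequences), then
`↓₁ru'(b,d) = ↓₁ru'(c,d)`: the concise raw update of the truncation of `c` equals the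
truncation of the classic raw update of `c`. -/
theorem trunc_ruC_eq (lo hi : ℕ) (hlo : lo = 1 ∨ lo = 2) (hlohi : lo ≤ hi) (k : ℕ)
    (c : ℕ → Option ℕ) (hc : ∀ i ≤ k, c i = none ∨ ∃ a, c i = some a ∧ CminusMem lo hi a)
    (b : ℕ → Option ℕ) (hbc : ∀ i ≤ k, b i = trunc k c i)
    (d : ℕ) (hd : d ∈ Set.Icc lo hi) :
    ∀ i ≤ k, trunc k (ruC k hi b d) i = trunc k (ruC k hi c d) i :=
  trunc_ruC_eq_general hi k c b hbc d
end
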